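/- arXiv:2402.16259 — 2 statements merged into one kernel-verified Lean document; each statement's English description precedes it below -/
import Mathlib

section
/- Let M be a matroid and ψ: E(M) → Γ a labeling to an abelian group. If there exists a basis B of M such that every basis B' with |B \ B'| ≤ 1 satisfies ψ(B') = ψ(B), then all bases of M have the same label ψ. -/
/-! Symmetric basis exchange lets one move any base `B'` towards `B` one element at a time,
trading `f ∈ B' \ B` for `e ∈ B \ B'` in such a way that `B - e + f` is a base as well.
Applied to `B - e + f`, the hypothesis gives `ψ f = ψ e`, so each step preserves the label. -/

open Set

theorem finsum_mem_insert_sdiff_singleton_add {α M : Type*} [AddCommMonoid M] (ψ : α → M)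
    {s : Set α} {e f : α} (hs : s.Finite) (he : e ∈ s) (hf : f ∉ s) :
    (∑ᶠ x ∈ insert f (s \ {e}), ψ x) + ψ e = (∑ᶠ x ∈ s, ψ x) + ψ f := by
  have hsplit := finsum_mem_insert ψ (a := e) (s := s \ {e}) (by simp) hs.sdiff
  rw [insert_sdiff_singleton, insert_eq_of_mem he] at hsplit
  rw [finsum_mem_insert ψ (fun h ↦ hf h.1) hs.sdiff, hsplit]
  abel

namespace Matroid

variable {α : Type*} {M : Matroid α} {B B' : Set α} {e : α}

theorem IsBase.exists_symm_exchange (hB : M.IsBase B) (hB' : M.IsBase B') (he : e ∈ B \ B') :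
    ∃ f ∈ B' \ B, M.IsBase (insert f (B \ {e})) ∧ M.IsBase (insert e (B' \ {f})) := by
  -- A circuit and a cocircuit never meet in exactly one element, so the fundamental circuit
  -- of `e` in `B'` and the fundamental cocircuit of `e` for `B` share some `f ≠ e`.
  have heE : e ∈ M.E := hB.subset_ground he.1
  obtain ⟨f, ⟨hfC, hfK⟩, hfe⟩ := ((hB'.fundCircuit_isCircuit heE he.2).isCocircuit_inter_nontrivial
    (fundCocircuit_isCocircuit he.1 hB) ⟨e, mem_fundCircuit .., mem_fundCocircuit ..⟩).exists_ne e
  have hfB' : f ∈ B' := (M.fundCircuit_subset_insert e B' hfC).resolve_left hfe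
  have hfB : f ∉ B := ((M.fundCocircuit_subset_insert_compl e B hfK).resolve_left hfe).2
  rw [hB.mem_fundCocircuit_iff_mem_fundCircuit,
    hB.indep.mem_fundCircuit_iff (by rw [hB.closure_eq]; exact hB'.subset_ground hfB') hfB,
    ← insert_sdiff_singleton_comm hfe] at hfK
  rw [hB'.indep.mem_fundCircuit_iff (by rwa [hB'.closure_eq]) he.2,
    ← insert_sdiff_singleton_comm (Ne.symm hfe)] at hfC
  exact ⟨f, ⟨hfB', hfB⟩, hB.exchange_isBase_of_indep hfB hfK,
    hB'.exchange_isBase_of_indep he.2 hfC⟩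

theorem IsBase.finsum_eq_of_forall_exchange {Γ : Type*} [AddCancelCommMonoid Γ] [M.RankFinite]
    {ψ : α → Γ} (hB : M.IsBase B)
    (hψ : ∀ e ∈ B, ∀ f ∉ B, M.IsBase (insert f (B \ {e})) → ψ f = ψ e) (hB' : M.IsBase B') :
    ∑ᶠ x ∈ B', ψ x = ∑ᶠ x ∈ B, ψ x := by
  obtain ⟨n, hn⟩ : ∃ n, (B \ B').ncard = n := ⟨_, rfl⟩
  induction n generalizing B' with
  | zero =>
    rw [ncard_eq_zero hB.finite.sdiff, sdiff_eq_empty] at hn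
    rw [hB.eq_of_subset_isBase hB' hn]
  | succ n ih =>
    obtain ⟨e, he⟩ : (B \ B').Nonempty := nonempty_of_ncard_ne_zero (by omega)
    obtain ⟨f, hf, hBf, hB'e⟩ := hB.exists_symm_exchange hB' he
    have hcard : (B \ insert e (B' \ {f})).ncard = n := by
      have : B \ insert e (B' \ {f}) = (B \ B') \ {e} := by
        ext x
        simp only [mem_sdiff, mem_insert_iff, mem_singleton_iff, not_or]
        grind [hf.2]
      rw [this, ncard_sdiff_singleton_of_mem he, hn, Nat.add_sub_cancel]
    apply add_right_cancel (b := ψ e)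
    calc ∑ᶠ x ∈ B', ψ x + ψ e = ∑ᶠ x ∈ insert e (B' \ {f}), ψ x + ψ f :=
          (finsum_mem_insert_sdiff_singleton_add ψ hB'.finite hf.1 he.2).symm
      _ = ∑ᶠ x ∈ B, ψ x + ψ e := by rw [ih hB'e hcard, hψ e he.1 f hf.2 hBf]

end Matroid

/-- If a matroid has a basis `B` such that every basis `B'` with
`|B \ B'| ≤ 1` satisfies `ψ(B') = ψ(B)`, then all bases have the same label. -/
theorem stmt_2 {α Γ : Type*} [AddCommGroup Γ] (M : Matroid α) [M.Finite]
    (ψ : α → Γ) (B : Set α) (hB : M.IsBase B)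
    (h : ∀ B', M.IsBase B' → (B \ B').ncard ≤ 1 →
      (∑ᶠ e ∈ B', ψ e) = ∑ᶠ e ∈ B, ψ e) :
    ∀ B₁ B₂, M.IsBase B₁ → M.IsBase B₂ →
      (∑ᶠ e ∈ B₁, ψ e) = ∑ᶠ e ∈ B₂, ψ e := by
  have hψ : ∀ e ∈ B, ∀ f ∉ B, M.IsBase (insert f (B \ {e})) → ψ f = ψ e := by
    intro e he f hf hBef
    have hcard : (B \ insert f (B \ {e})).ncard ≤ 1 := by
      refine (ncard_le_ncard ?_ (finite_singleton e)).trans (ncard_singleton e).le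
      intro x hx
      by_contra hxe
      exact hx.2 (mem_insert_of_mem f ⟨hx.1, hxe⟩)
    have hsum := finsum_mem_insert_sdiff_singleton_add ψ hB.finite he hf
    rw [h _ hBef hcard] at hsum
    exact (add_left_cancel hsum).symm
  intro B₁ B₂ hB₁ hB₂
  rw [hB.finsum_eq_of_forall_exchange hψ hB₁, hB.finsum_eq_of_forall_exchange hψ hB₂]
end

section
/- Let M be a matroid, ψ: E(M) → Γ a labeling to an abelian group, and F ⊆ Γ a 2-element set. If M has at least one basis whose label is not in F, then for any basis B there exists a basis B* with ψ(B*) ∉ F and |B \ B*| ≤ 2. -/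
/-!
Write `F = {a, b}` and suppose every base `C` with `|B \ C| ≤ 2` has `ψ(C) ∈ F`; we show by
induction on `|B \ C|` that then every base has its label in `F`, contradicting the existence of
an `F`-avoiding base.

If `|B \ C| ≥ 3`, extend `(C ∩ B) ∪ I`, for three elements `I ⊆ B \ C`, to a base `D ⊆ C ∪ I`.
Every base between `C ∩ D` and `C ∪ D` other than `C` is closer to `B`, so has its label in `F`.
Symmetric exchange, together with the fact that two elements of `D \ C` cannot both lie in the
span of `C` minus two elements of `C \ D`, lets us enumerate `D \ C = {x₀, x₁, x₂}` and
`C \ D = {y₀, y₁, y₂}` so that `C - yₖ + xₖ` is a base for every `k` and `D - xₖ + yₖ` is a base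
for `k = 0, 1`. With `p = ψ(D)` and `uₖ = ψ(yₖ) - ψ(xₖ)`, the labels of these bases are
`p + u₀ + u₁ + u₂ - uₖ` and `p + uₖ`; six vertices of the cube `p + ∑_{k ∈ S} uₖ` lie in `F`,
and that forces the vertex `ψ(C) = p + u₀ + u₁ + u₂` into `F` as well.
-/

open Set Function

section Labels

variable {α Γ : Type*} [AddCommGroup Γ] (ψ : α → Γ) {C D : Set α}

/-- Unless `u = 0` or `v = 0`, we get `p + u = p + v ≠ p` and `p + u + v = p`, so `u = v = -u`;
then `huw` leaves `w ∈ {0, u}`. -/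
lemma add_add_add_mem_pair {a b p u v w : Γ} (hp : p ∈ ({a, b} : Set Γ))
    (hu : p + u ∈ ({a, b} : Set Γ)) (hv : p + v ∈ ({a, b} : Set Γ))
    (huv : p + u + v ∈ ({a, b} : Set Γ)) (huw : p + u + w ∈ ({a, b} : Set Γ))
    (hvw : p + v + w ∈ ({a, b} : Set Γ)) :
    p + u + v + w ∈ ({a, b} : Set Γ) := by
  simp only [mem_insert_iff, mem_singleton_iff] at *
  grind

lemma finsum_mem_insert_sdiff_singleton (hC : C.Finite) {x y : α} (hx : x ∉ C) (hy : y ∈ C) :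
    ∑ᶠ e ∈ insert x (C \ {y}), ψ e = ∑ᶠ e ∈ C, ψ e + ψ x - ψ y := by
  rw [finsum_mem_insert ψ (fun h ↦ hx h.1) hC.sdiff,
    ← finsum_mem_add_sdiff (singleton_subset_iff.2 hy) hC, finsum_mem_singleton]
  abel

lemma finsum_mem_eq_finsum_mem_add_sum_sub {ι : Type*} [Fintype ι] (hC : C.Finite)
    (hD : D.Finite) {x y : ι → α} (hx : Injective x) (hy : Injective y) (hxr : range x = D \ C)
    (hyr : range y = C \ D) :
    ∑ᶠ e ∈ C, ψ e = ∑ᶠ e ∈ D, ψ e + ∑ k, (ψ (y k) - ψ (x k)) := by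
  rw [← finsum_mem_inter_add_sdiff D hC, ← finsum_mem_inter_add_sdiff C hD, ← hxr, ← hyr,
    finsum_mem_range hx, finsum_mem_range hy, finsum_eq_sum_of_fintype (fun k ↦ ψ (x k)),
    finsum_eq_sum_of_fintype (fun k ↦ ψ (y k)), Finset.sum_sub_distrib, inter_comm]
  abel

lemma finsum_mem_mem_pair_of_exchanges (hC : C.Finite) (hD : D.Finite) {x y : Fin 3 → α}
    (hx : Injective x) (hy : Injective y) (hxr : range x = D \ C) (hyr : range y = C \ D)
    {a b : Γ} (hDab : ∑ᶠ e ∈ D, ψ e ∈ ({a, b} : Set Γ))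
    (hCab : ∀ k, ∑ᶠ e ∈ insert (x k) (C \ {y k}), ψ e ∈ ({a, b} : Set Γ))
    (hD₀ : ∑ᶠ e ∈ insert (y 0) (D \ {x 0}), ψ e ∈ ({a, b} : Set Γ))
    (hD₁ : ∑ᶠ e ∈ insert (y 1) (D \ {x 1}), ψ e ∈ ({a, b} : Set Γ)) :
    ∑ᶠ e ∈ C, ψ e ∈ ({a, b} : Set Γ) := by
  have hxDC k : x k ∈ D \ C := hxr ▸ mem_range_self k
  have hyCD k : y k ∈ C \ D := hyr ▸ mem_range_self k
  have hsum := finsum_mem_eq_finsum_mem_add_sum_sub ψ hC hD hx hy hxr hyr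
  rw [Fin.sum_univ_three] at hsum
  have hCk k : ∑ᶠ e ∈ insert (x k) (C \ {y k}), ψ e = ∑ᶠ e ∈ C, ψ e - (ψ (y k) - ψ (x k)) := by
    rw [finsum_mem_insert_sdiff_singleton ψ hC (hxDC k).2 (hyCD k).1]
    abel
  have hDk k : ∑ᶠ e ∈ insert (y k) (D \ {x k}), ψ e = ∑ᶠ e ∈ D, ψ e + (ψ (y k) - ψ (x k)) := by
    rw [finsum_mem_insert_sdiff_singleton ψ hD (hyCD k).2 (hxDC k).1]
    abel
  rw [hDk] at hD₀ hD₁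
  have hC₀ := hCk 0 ▸ hCab 0
  have hC₁ := hCk 1 ▸ hCab 1
  have hC₂ := hCk 2 ▸ hCab 2
  rw [hsum] at hC₀ hC₁ hC₂ ⊢
  rw [← add_assoc, ← add_assoc]
  refine add_add_add_mem_pair hDab hD₀ hD₁ ?_ ?_ ?_
  · convert hC₂ using 2; abel
  · convert hC₁ using 2; abel
  · convert hC₀ using 2; abel

end Labels

lemma Set.Finite.exists_injective_range_eq {α : Type*} {s : Set α} (hs : s.Finite) {n : ℕ}
    (h : s.ncard = n) : ∃ x : Fin n → α, Injective x ∧ range x = s := by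
  have := hs.to_subtype
  let e := Finite.equivFinOfCardEq h
  refine ⟨fun i ↦ e.symm i, Subtype.val_injective.comp e.symm.injective, ?_⟩
  ext a
  exact ⟨by rintro ⟨i, rfl⟩; exact (e.symm i).2, fun ha ↦ ⟨e ⟨a, ha⟩, by simp⟩⟩

lemma Set.ncard_sdiff_lt_ncard_sdiff {α : Type*} {B C D C' : Set α} (hB : B.Finite)
    (hCB : C ∩ B ⊆ D) (hDC : D \ C ⊆ B) (hCDC' : C ∩ D ⊆ C') (hC'CD : C' ⊆ C ∪ D)
    (hC'C : (C' \ C).Nonempty) :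
    (B \ C').ncard < (B \ C).ncard := by
  obtain ⟨z, hzC', hzC⟩ := hC'C
  have hzD : z ∈ D := (hC'CD hzC').resolve_left hzC
  refine ncard_lt_ncard (ssubset_iff_subset_ne.2 ⟨?_, fun h ↦ ?_⟩) hB.sdiff
  · rintro e ⟨heB, heC'⟩
    exact ⟨heB, fun heC ↦ heC' (hCDC' ⟨heC, hCB ⟨heC, heB⟩⟩)⟩
  · have hz : z ∈ B \ C := ⟨hDC ⟨hzD, hzC⟩, hzC⟩
    rw [← h] at hz
    exact hz.2 hzC'

lemma exists_ne_ne_of_forall_exists {T : Fin 3 → Fin 3 → Prop} (hrow : ∀ i, ∃ j, T i j)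
    (hcol : ∀ j, ∃ i, T i j) : ∃ i₁ i₂ j₁ j₂, i₁ ≠ i₂ ∧ j₁ ≠ j₂ ∧ T i₁ j₁ ∧ T i₂ j₂ := by
  choose c hc using hrow
  by_cases h01 : c 0 = c 1
  · by_cases h02 : c 0 = c 2
    · obtain ⟨j, hj⟩ := exists_ne (c 0)
      obtain ⟨r, hr⟩ := hcol j
      obtain ⟨i, hi⟩ := exists_ne r
      have hci : c i = c 0 := by fin_cases i <;> [rfl; exact h01.symm; exact h02.symm]
      exact ⟨i, r, c 0, j, hi, hj.symm, hci ▸ hc i, hr⟩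
    · exact ⟨0, 2, c 0, c 2, by decide, h02, hc 0, hc 2⟩
  · exact ⟨0, 1, c 0, c 1, by decide, h01, hc 0, hc 1⟩

lemma exists_perm_apply_zero_apply_one :
    ∀ i₁ i₂ : Fin 3, i₁ ≠ i₂ → ∃ σ : Equiv.Perm (Fin 3), σ 0 = i₁ ∧ σ 1 = i₂ := by
  decide

/-- Rows stand for the elements `xᵢ` of `D \ C` and columns for the elements `yⱼ` of `C \ D`, with
`R i j` meaning that `C - yⱼ + xᵢ` is a base and `S i j` that `D - xᵢ + yⱼ` is one. -/
def ExchangeMatching (R S : Fin 3 → Fin 3 → Prop) : Prop :=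
  ∃ α β : Equiv.Perm (Fin 3), (∀ k, R (α k) (β k)) ∧ S (α 0) (β 0) ∧ S (α 1) (β 1)

namespace ExchangeMatching

variable {R S : Fin 3 → Fin 3 → Prop}

lemma of_relabel (σ τ : Equiv.Perm (Fin 3))
    (h : ExchangeMatching (fun i j ↦ R (σ i) (τ j)) (fun i j ↦ S (σ i) (τ j))) :
    ExchangeMatching R S := by
  obtain ⟨α, β, hR, h0, h1⟩ := h
  exact ⟨α.trans σ, β.trans τ, hR, h0, h1⟩

lemma of_diagonal (h00 : R 0 0 ∧ S 0 0) (h11 : R 1 1 ∧ S 1 1) (hrow : ∃ j, R 2 j ∧ S 2 j)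
    (hcol : ∃ i, R i 2 ∧ S i 2)
    (hR : ∀ i i' j j', i ≠ i' → j ≠ j' → R i j ∨ R i j' ∨ R i' j ∨ R i' j') :
    ExchangeMatching R S := by
  obtain ⟨hR00, hS00⟩ := h00
  obtain ⟨hR11, hS11⟩ := h11
  by_cases hR22 : R 2 2
  · exact ⟨1, 1, fun k ↦ by fin_cases k <;> assumption, hS00, hS11⟩
  obtain ⟨j, hRj, hSj⟩ := hrow
  obtain ⟨i, hRi, hSi⟩ := hcol
  fin_cases j <;> fin_cases i
  all_goals try contradiction
  · exact ⟨1, Equiv.swap 0 2, fun k ↦ by fin_cases k <;> assumption, hSi, hS11⟩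
  · rcases hR 0 2 1 2 (by decide) (by decide) with hR01 | hR02 | hR21 | hR22'
    · exact ⟨finRotate 3, (finRotate 3).symm, fun k ↦ by fin_cases k <;> assumption, hSi, hSj⟩
    · exact ⟨finRotate 3, Equiv.swap 0 1, fun k ↦ by fin_cases k <;> assumption, hS11, hSj⟩
    · exact ⟨1, Equiv.swap 1 2, fun k ↦ by fin_cases k <;> assumption, hS00, hSi⟩
    · contradiction
  · rcases hR 1 2 0 2 (by decide) (by decide) with hR10 | hR12 | hR20 | hR22'
    · exact ⟨Equiv.swap 1 2, Equiv.swap 0 2, fun k ↦ by fin_cases k <;> assumption, hSi, hSj⟩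
    · exact ⟨Equiv.swap 1 2, 1, fun k ↦ by fin_cases k <;> assumption, hS00, hSj⟩
    · exact ⟨1, Equiv.swap 0 2, fun k ↦ by fin_cases k <;> assumption, hSi, hS11⟩
    · contradiction
  · exact ⟨1, Equiv.swap 1 2, fun k ↦ by fin_cases k <;> assumption, hS00, hSi⟩

lemma of_forall (hrow : ∀ i, ∃ j, R i j ∧ S i j) (hcol : ∀ j, ∃ i, R i j ∧ S i j)
    (hR : ∀ i i' j j', i ≠ i' → j ≠ j' → R i j ∨ R i j' ∨ R i' j ∨ R i' j') :
    ExchangeMatching R S := by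
  obtain ⟨i₁, i₂, j₁, j₂, hi, hj, h₁, h₂⟩ := exists_ne_ne_of_forall_exists hrow hcol
  obtain ⟨σ, rfl, rfl⟩ := exists_perm_apply_zero_apply_one i₁ i₂ hi
  obtain ⟨τ, rfl, rfl⟩ := exists_perm_apply_zero_apply_one j₁ j₂ hj
  refine of_relabel σ τ (of_diagonal h₁ h₂ ?_ ?_ fun i i' j j' hi hj ↦
    hR _ _ _ _ (σ.injective.ne hi) (τ.injective.ne hj))
  · obtain ⟨j, hj⟩ := hrow (σ 2)
    exact ⟨τ.symm j, by simpa using hj⟩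
  · obtain ⟨i, hi⟩ := hcol (τ 2)
    exact ⟨σ.symm i, by simpa using hi⟩

end ExchangeMatching

namespace Matroid

variable {α : Type*} {M : Matroid α} {B C D I X Y : Set α} {x : α}

lemma IsBase.exists_symm_exchange_s6 (hC : M.IsBase C) (hD : M.IsBase D) (hx : x ∈ D \ C) :
    ∃ y ∈ C \ D, M.IsBase (insert x (C \ {y})) ∧ M.IsBase (insert y (D \ {x})) := by
  have hxE : x ∈ M.E := hD.subset_ground hx.1
  obtain ⟨y, ⟨hyK, hyK'⟩, hyx⟩ :=
    ((hC.fundCircuit_isCircuit hxE hx.2).isCocircuit_inter_nontrivial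
      (M.fundCocircuit_isCocircuit hx.1 hD)
      ⟨x, M.mem_fundCircuit x C, M.mem_fundCocircuit x D⟩).exists_ne x
  have hyC : y ∈ C := by simpa [hyx] using M.fundCircuit_subset_insert x C hyK
  have hyD : y ∉ D := fun hyD ↦ hyx (by
    simpa using (M.fundCocircuit_inter_eq hx.1).subset ⟨hyK', hyD⟩)
  refine ⟨y, ⟨hyC, hyD⟩, ?_, ?_⟩
  · rw [hC.indep.mem_fundCircuit_iff (by rwa [hC.closure_eq]) hx.2] at hyK
    rw [insert_sdiff_singleton_comm hyx.symm]
    exact hC.exchange_isBase_of_indep' hyC hx.2 hyK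
  · rw [hD.mem_fundCocircuit_iff_mem_fundCircuit, hD.indep.mem_fundCircuit_iff
      (by rw [hD.closure_eq]; exact hC.subset_ground hyC) hyD] at hyK'
    rw [insert_sdiff_singleton_comm hyx]
    exact hD.exchange_isBase_of_indep' hx.1 hyD hyK'

lemma IsBase.ncard_add_ncard_le_of_subset_closure [M.RankFinite] (hC : M.IsBase C)
    (hD : M.IsBase D) (hX : X ⊆ D \ C) (hY : Y ⊆ C \ D) (hXY : X ⊆ M.closure (C \ Y)) :
    X.ncard + Y.ncard ≤ (D \ C).ncard := by
  have hCfin := hC.finite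
  have hindep : M.Indep (C ∩ D ∪ X) :=
    hD.indep.subset (union_subset inter_subset_right (hX.trans sdiff_subset))
  have hCD : C ∩ D ⊆ C \ Y := fun e he ↦ ⟨he.1, fun heY ↦ (hY heY).2 he.2⟩
  have hsub : C ∩ D ∪ X ⊆ M.closure (C \ Y) :=
    union_subset (hCD.trans (M.subset_closure _ (sdiff_subset.trans hC.subset_ground))) hXY
  have hle : (C ∩ D ∪ X).encard ≤ (C \ Y).encard := by
    rw [← (hC.indep.subset sdiff_subset).eRk_eq_encard, ← M.eRk_closure_eq]
    exact hindep.encard_le_eRk_of_subset hsub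
  have hdisj : Disjoint (C ∩ D) X :=
    disjoint_left.2 fun e he heX ↦ (hX heX).2 he.1
  rw [encard_union_eq hdisj, ← (hCfin.inter_of_left D).cast_ncard_eq,
    ← ((hD.finite.subset sdiff_subset).subset hX).cast_ncard_eq,
    ← hCfin.sdiff.cast_ncard_eq, ← Nat.cast_add, Nat.cast_le] at hle
  have h1 := ncard_sdiff_add_ncard_of_subset (hY.trans sdiff_subset) hCfin
  have h2 := ncard_inter_add_ncard_sdiff_eq_ncard C D hCfin
  have h3 := hC.ncard_sdiff_comm hD
  omega

lemma IsBase.isBase_exchange_of_ncard_sdiff_le_three [M.RankFinite] (hC : M.IsBase C)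
    (hD : M.IsBase D) (h3 : (D \ C).ncard ≤ 3) {x x' y y' : α} (hx : x ∈ D \ C)
    (hx' : x' ∈ D \ C) (hxx' : x ≠ x') (hy : y ∈ C \ D) (hy' : y' ∈ C \ D) (hyy' : y ≠ y') :
    M.IsBase (insert x (C \ {y})) ∨ M.IsBase (insert x (C \ {y'})) ∨
      M.IsBase (insert x' (C \ {y})) ∨ M.IsBase (insert x' (C \ {y'})) := by
  by_contra! h
  obtain ⟨hxy, hxy', hx'y, hx'y'⟩ := h
  have hcl : ∀ z ∈ D \ C, ¬ M.IsBase (insert z (C \ {y})) →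
      ¬ M.IsBase (insert z (C \ {y'})) → z ∈ M.closure (C \ {y, y'}) := by
    intro z hz hzy hzy'
    have hzE : z ∈ M.E := hD.subset_ground hz.1
    rw [insert_eq, ← sdiff_inter_sdiff,
      (hC.indep.subset (union_subset sdiff_subset sdiff_subset)).closure_inter_eq_inter_closure]
    exact ⟨by_contra fun h ↦ hzy (hC.exchange_base_of_notMem_closure hy.1 h),
      by_contra fun h ↦ hzy' (hC.exchange_base_of_notMem_closure hy'.1 h)⟩
  have := hC.ncard_add_ncard_le_of_subset_closure hD (X := {x, x'}) (Y := {y, y'})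
    (pair_subset hx hx') (pair_subset hy hy')
    (pair_subset (hcl x hx hxy hxy') (hcl x' hx' hx'y hx'y'))
  rw [ncard_pair hxx', ncard_pair hyy'] at this
  omega

lemma IsBase.exists_isBase_sdiff_eq (hB : M.IsBase B) (hC : M.IsBase C) (hI : I ⊆ B \ C) :
    ∃ D, M.IsBase D ∧ C ∩ B ⊆ D ∧ D \ C = I := by
  obtain ⟨D, hD, hJD, hDJ⟩ := (hB.indep.subset (union_subset (hI.trans sdiff_subset)
    inter_subset_right)).exists_isBase_subset_union_isBase hC
  refine ⟨D, hD, subset_union_right.trans hJD, subset_antisymm ?_ ?_⟩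
  · intro e he
    rcases hDJ he.1 with (heI | heCB) | heC
    · exact heI
    · exact absurd heCB.1 he.2
    · exact absurd heC he.2
  · exact fun e he ↦ ⟨hJD (Or.inl he), (hI he).2⟩

lemma IsBase.exchangeMatching [M.RankFinite] (hC : M.IsBase C) (hD : M.IsBase D)
    (h3 : (D \ C).ncard = 3) {x y : Fin 3 → α} (hx : Injective x) (hy : Injective y)
    (hxr : range x = D \ C) (hyr : range y = C \ D) :
    ExchangeMatching (fun i j ↦ M.IsBase (insert (x i) (C \ {y j})))
      (fun i j ↦ M.IsBase (insert (y j) (D \ {x i}))) := by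
  have hxDC i : x i ∈ D \ C := hxr ▸ mem_range_self i
  have hyCD j : y j ∈ C \ D := hyr ▸ mem_range_self j
  refine .of_forall (fun i ↦ ?_) (fun j ↦ ?_) fun i i' j j' hi hj ↦
    hC.isBase_exchange_of_ncard_sdiff_le_three hD h3.le (hxDC i) (hxDC i') (hx.ne hi)
      (hyCD j) (hyCD j') (hy.ne hj)
  · obtain ⟨_, hyCD', h⟩ := hC.exists_symm_exchange_s6 hD (hxDC i)
    obtain ⟨j, rfl⟩ := hyr ▸ hyCD'
    exact ⟨j, h⟩
  · obtain ⟨_, hxDC', h₁, h₂⟩ := hD.exists_symm_exchange_s6 hC (hyCD j)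
    obtain ⟨i, rfl⟩ := hxr ▸ hxDC'
    exact ⟨i, h₂, h₁⟩

variable {Γ : Type*} [AddCommGroup Γ] (ψ : α → Γ)

lemma IsBase.finsum_mem_mem_pair_of_ncard_sdiff_eq_three [M.RankFinite] (hC : M.IsBase C)
    (hD : M.IsBase D) (h3 : (D \ C).ncard = 3) {a b : Γ}
    (hF : ∀ C', M.IsBase C' → C ∩ D ⊆ C' → C' ⊆ C ∪ D → (C' \ C).Nonempty →
      ∑ᶠ e ∈ C', ψ e ∈ ({a, b} : Set Γ)) :
    ∑ᶠ e ∈ C, ψ e ∈ ({a, b} : Set Γ) := by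
  obtain ⟨x, hx, hxr⟩ := hD.finite.sdiff.exists_injective_range_eq h3
  obtain ⟨y, hy, hyr⟩ :=
    hC.finite.sdiff.exists_injective_range_eq ((hC.ncard_sdiff_comm hD).trans h3)
  have hxDC i : x i ∈ D \ C := hxr ▸ mem_range_self i
  have hyCD j : y j ∈ C \ D := hyr ▸ mem_range_self j
  obtain ⟨σ, τ, hR, hS₀, hS₁⟩ := hC.exchangeMatching hD h3 hx hy hxr hyr
  have hCx (i j : Fin 3) (hij : M.IsBase (insert (x i) (C \ {y j}))) :
      ∑ᶠ e ∈ insert (x i) (C \ {y j}), ψ e ∈ ({a, b} : Set Γ) :=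
    hF _ hij (fun e he ↦ Or.inr ⟨he.1, fun h ↦ (hyCD j).2 (h ▸ he.2)⟩)
      (insert_subset (Or.inr (hxDC i).1) (sdiff_subset.trans subset_union_left))
      ⟨x i, mem_insert _ _, (hxDC i).2⟩
  have hDy (i j : Fin 3) (hij : M.IsBase (insert (y j) (D \ {x i}))) :
      ∑ᶠ e ∈ insert (y j) (D \ {x i}), ψ e ∈ ({a, b} : Set Γ) := by
    obtain ⟨i', hi'⟩ := exists_ne i
    exact hF _ hij (fun e he ↦ Or.inr ⟨he.2, fun h ↦ (hxDC i).2 (h ▸ he.1)⟩)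
      (insert_subset (Or.inl (hyCD j).1) (sdiff_subset.trans subset_union_right))
      ⟨x i', Or.inr ⟨(hxDC i').1, hx.ne hi'⟩, (hxDC i').2⟩
  exact finsum_mem_mem_pair_of_exchanges ψ hC.finite hD.finite (hx.comp σ.injective)
    (hy.comp τ.injective) (by rw [range_comp, σ.range_eq_univ, image_univ, hxr])
    (by rw [range_comp, τ.range_eq_univ, image_univ, hyr])
    (hF D hD inter_subset_right subset_union_right ⟨x 0, hxDC 0⟩) (fun k ↦ hCx _ _ (hR k))
    (hDy _ _ hS₀) (hDy _ _ hS₁)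

lemma IsBase.finsum_mem_mem_pair_of_forall_ncard_sdiff_le_two [M.RankFinite] (hB : M.IsBase B)
    {a b : Γ} (hnear : ∀ C, M.IsBase C → (B \ C).ncard ≤ 2 → ∑ᶠ e ∈ C, ψ e ∈ ({a, b} : Set Γ))
    (hC : M.IsBase C) : ∑ᶠ e ∈ C, ψ e ∈ ({a, b} : Set Γ) := by
  induction hn : (B \ C).ncard using Nat.strong_induction_on generalizing C with
  | _ n ih =>
    obtain hle | hlt := le_or_gt n 2
    · exact hnear C hC (hn ▸ hle)
    obtain ⟨I, hI, hI3⟩ := exists_subset_card_eq (s := B \ C) (n := 3) (by omega)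
    obtain ⟨D, hD, hCBD, hDC⟩ := hB.exists_isBase_sdiff_eq hC hI
    refine hC.finsum_mem_mem_pair_of_ncard_sdiff_eq_three ψ hD (hDC ▸ hI3)
      fun C' hC' hCDC' hC'CD hC'C ↦ ih _ ?_ hC' rfl
    exact hn ▸ ncard_sdiff_lt_ncard_sdiff hB.finite hCBD (hDC ▸ hI.trans sdiff_subset) hCDC'
      hC'CD hC'C

end Matroid

/-- For a 2-element forbidden set `F`, if an `F`-avoiding basis exists then
for any basis `B` there is an `F`-avoiding basis `B*` with `|B \ B*| ≤ 2`. -/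
theorem stmt_6 {α Γ : Type*} [AddCommGroup Γ] (M : Matroid α) [M.Finite]
    (ψ : α → Γ) (F : Finset Γ) (hF : F.card = 2)
    (hex : ∃ B', M.IsBase B' ∧ (∑ᶠ e ∈ B', ψ e) ∉ F)
    (B : Set α) (hB : M.IsBase B) :
    ∃ Bstar, M.IsBase Bstar ∧ (∑ᶠ e ∈ Bstar, ψ e) ∉ F ∧
      (B \ Bstar).ncard ≤ 2 := by
  classical
  obtain ⟨a, b, -, hab⟩ := Finset.card_eq_two.mp hF
  have hmem : ∀ g, g ∈ F ↔ g ∈ ({a, b} : Set Γ) := by simp [hab]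
  by_contra! hnear
  obtain ⟨B', hB', hB'F⟩ := hex
  exact hB'F <| (hmem _).2 <| hB.finsum_mem_mem_pair_of_forall_ncard_sdiff_le_two ψ
    (fun C hC h2 ↦ (hmem _).1 <| by_contra fun h ↦ (hnear C hC h).not_ge h2) hB'
end
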